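/- Let g be a Gaussian random variable with mean 0 and variance 1/s for s > 0, m ∈ ℝ, ε > 0. Then P(|g - m| ≤ ε) ≤ exp(-s·m²/2)·cosh(s·ε·|m|)·P(|g| ≤ ε). -/
import Mathlib

open MeasureTheory ProbabilityTheory

private lemma key_ineq (s : ℝ) (hs : 0 < s) (m : ℝ) (ε : ℝ) (hε : 0 < ε) :
    ∫ u in (-ε)..ε, Real.exp (-(s * (u + m) ^ 2) / 2) ≤
      Real.exp (-s * m ^ 2 / 2) * Real.cosh (s * ε * |m|) *
        ∫ u in (-ε)..ε, Real.exp (-(s * u ^ 2) / 2) := by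
  have h1 : ∀ u : ℝ, Real.exp (-(s * (u + m) ^ 2) / 2) =
      Real.exp (-s * m ^ 2 / 2) * (Real.exp (-(s * u ^ 2) / 2) * Real.exp (-(s * u * m))) := by
    intro u
    rw [← Real.exp_add, ← Real.exp_add]
    ring_nf
  have hintc : IntervalIntegrable
      (fun u => Real.exp (-(s * u ^ 2) / 2) * Real.cosh (s * u * m)) volume (-ε) ε :=
    (Continuous.mul (by continuity) (by continuity)).intervalIntegrable _ _
  -- symmetrization
  have hB : (∫ u in (-ε)..ε, Real.exp (-(s * u ^ 2) / 2) * Real.exp (-(s * u * m)))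
      = ∫ u in (-ε)..ε, Real.exp (-(s * u ^ 2) / 2) * Real.cosh (s * u * m) := by
    have hflip : (∫ u in (-ε)..ε, Real.exp (-(s * u ^ 2) / 2) * Real.exp (-(s * u * m)))
        = ∫ u in (-ε)..ε, Real.exp (-(s * u ^ 2) / 2) * Real.exp (s * u * m) := by
      have := intervalIntegral.integral_comp_neg
        (fun u => Real.exp (-(s * u ^ 2) / 2) * Real.exp (s * u * m)) (a := -ε) (b := ε)
      simp only [neg_neg, mul_neg, neg_mul] at this ⊢
      rw [← this]
      apply intervalIntegral.integral_congr
      intro x _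
      ring_nf
    have h2 : (∫ u in (-ε)..ε, Real.exp (-(s * u ^ 2) / 2) * Real.exp (-(s * u * m)))
        + (∫ u in (-ε)..ε, Real.exp (-(s * u ^ 2) / 2) * Real.exp (s * u * m))
        = 2 * ∫ u in (-ε)..ε, Real.exp (-(s * u ^ 2) / 2) * Real.cosh (s * u * m) := by
      rw [← intervalIntegral.integral_add
        ((by continuity : Continuous fun u : ℝ =>
          Real.exp (-(s * u ^ 2) / 2) * Real.exp (-(s * u * m))).intervalIntegrable _ _)
        ((by continuity : Continuous fun u : ℝ =>
          Real.exp (-(s * u ^ 2) / 2) * Real.exp (s * u * m)).intervalIntegrable _ _)]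
      rw [← intervalIntegral.integral_const_mul]
      apply intervalIntegral.integral_congr
      intro x _
      simp only [Real.cosh_eq]
      ring_nf
    linarith [h2, hflip]
  -- pointwise bound on cosh
  have hmono : (∫ u in (-ε)..ε, Real.exp (-(s * u ^ 2) / 2) * Real.cosh (s * u * m))
      ≤ ∫ u in (-ε)..ε, Real.exp (-(s * u ^ 2) / 2) * Real.cosh (s * ε * |m|) := by
    apply intervalIntegral.integral_mono_on (by linarith) hintc
      ((Continuous.mul (by continuity) continuous_const).intervalIntegrable _ _)
    intro x hx
    apply mul_le_mul_of_nonneg_left _ (Real.exp_nonneg _)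
    rw [Real.cosh_le_cosh]
    have hx1 : |x| ≤ ε := abs_le.mpr ⟨hx.1, hx.2⟩
    have e1 : |s * x * m| = s * |x| * |m| := by
      rw [abs_mul, abs_mul, abs_of_pos hs]
    have e2 : s * |x| * |m| ≤ s * ε * |m| := by
      apply mul_le_mul_of_nonneg_right _ (abs_nonneg m)
      exact mul_le_mul_of_nonneg_left hx1 hs.le
    rw [e1]
    exact e2.trans (le_abs_self _)
  calc (∫ u in (-ε)..ε, Real.exp (-(s * (u + m) ^ 2) / 2))
      = Real.exp (-s * m ^ 2 / 2) *
        ∫ u in (-ε)..ε, Real.exp (-(s * u ^ 2) / 2) * Real.exp (-(s * u * m)) := by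
        rw [← intervalIntegral.integral_const_mul]
        exact intervalIntegral.integral_congr fun x _ => h1 x
    _ ≤ Real.exp (-s * m ^ 2 / 2) *
        ∫ u in (-ε)..ε, Real.exp (-(s * u ^ 2) / 2) * Real.cosh (s * ε * |m|) := by
        rw [hB]
        exact mul_le_mul_of_nonneg_left hmono (Real.exp_nonneg _)
    _ = Real.exp (-s * m ^ 2 / 2) * Real.cosh (s * ε * |m|) *
        ∫ u in (-ε)..ε, Real.exp (-(s * u ^ 2) / 2) := by
        rw [intervalIntegral.integral_mul_const]
        ring

theorem stmt_17 (s : ℝ) (hs : 0 < s) (m : ℝ) (ε : ℝ) (hε : 0 < ε) :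
    gaussianReal 0 (Real.toNNReal (1 / s)) {x | |x - m| ≤ ε} ≤
      ENNReal.ofReal (Real.exp (-s * m ^ 2 / 2) * Real.cosh (s * ε * |m|)) *
        gaussianReal 0 (Real.toNNReal (1 / s)) {x | |x| ≤ ε} := by
  have hv : Real.toNNReal (1 / s) ≠ 0 := by
    simp [Real.toNNReal_eq_zero, not_le, hs]
  have hvr : ((Real.toNNReal (1 / s)) : ℝ) = 1 / s :=
    Real.coe_toNNReal _ (by positivity)
  set C : ℝ := (Real.sqrt (2 * Real.pi * (1 / s)))⁻¹ with hC
  have hCpos : 0 < C := by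
    rw [hC]
    positivity
  have hpdf : ∀ x : ℝ, gaussianPDFReal 0 (Real.toNNReal (1 / s)) x
      = C * Real.exp (-(s * x ^ 2) / 2) := by
    intro x
    rw [gaussianPDFReal, hvr]
    congr 1
    rw [sub_zero]
    congr 1
    field_simp
  have hset1 : {x : ℝ | |x - m| ≤ ε} = Set.Icc (m - ε) (m + ε) := by
    ext x
    rw [Set.mem_setOf_eq, abs_le, Set.mem_Icc]
    constructor <;> (intro h; exact ⟨by linarith [h.1], by linarith [h.2]⟩)
  have hset2 : {x : ℝ | |x| ≤ ε} = Set.Icc (-ε) ε := by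
    ext x
    rw [Set.mem_setOf_eq, abs_le, Set.mem_Icc]
  rw [hset1, hset2, gaussianReal_apply_eq_integral _ hv, gaussianReal_apply_eq_integral _ hv,
    ← ENNReal.ofReal_mul (by positivity)]
  apply ENNReal.ofReal_le_ofReal
  have hIcc1 : (∫ x in Set.Icc (m - ε) (m + ε), gaussianPDFReal 0 (Real.toNNReal (1 / s)) x)
      = ∫ x in (m - ε)..(m + ε), C * Real.exp (-(s * x ^ 2) / 2) := by
    rw [intervalIntegral.integral_of_le (by linarith), ← MeasureTheory.integral_Icc_eq_integral_Ioc]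
    exact setIntegral_congr_fun measurableSet_Icc fun x _ => hpdf x
  have hIcc2 : (∫ x in Set.Icc (-ε) ε, gaussianPDFReal 0 (Real.toNNReal (1 / s)) x)
      = ∫ x in (-ε)..ε, C * Real.exp (-(s * x ^ 2) / 2) := by
    rw [intervalIntegral.integral_of_le (by linarith), ← MeasureTheory.integral_Icc_eq_integral_Ioc]
    exact setIntegral_congr_fun measurableSet_Icc fun x _ => hpdf x
  rw [hIcc1, hIcc2]
  have hshift : (∫ x in (m - ε)..(m + ε), C * Real.exp (-(s * x ^ 2) / 2))
      = C * ∫ u in (-ε)..ε, Real.exp (-(s * (u + m) ^ 2) / 2) := by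
    rw [← intervalIntegral.integral_const_mul,
      intervalIntegral.integral_comp_add_right (fun x => C * Real.exp (-(s * x ^ 2) / 2)) m]
    congr 1 <;> ring
  rw [hshift, intervalIntegral.integral_const_mul]
  have := key_ineq s hs m ε hε
  calc C * ∫ u in (-ε)..ε, Real.exp (-(s * (u + m) ^ 2) / 2)
      ≤ C * (Real.exp (-s * m ^ 2 / 2) * Real.cosh (s * ε * |m|) *
          ∫ u in (-ε)..ε, Real.exp (-(s * u ^ 2) / 2)) :=
        mul_le_mul_of_nonneg_left this hCpos.le
    _ = Real.exp (-s * m ^ 2 / 2) * Real.cosh (s * ε * |m|) *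
          (C * ∫ u in (-ε)..ε, Real.exp (-(s * u ^ 2) / 2)) := by ring
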